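/- arXiv:1801.02784 — 5 statements merged into one kernel-verified Lean document; each statement's English description precedes it below -/
import Mathlib

section
/- Let f(x) = x^r/r - x/e^{(r-1)/r} + (r-1)/(r e) where r ≥ 2 is an integer and e > 0. Then for all x > e^{-1/r}, f(x) ≥ ((r-1)/2) e^{-1+2/r} (x - e^{-1/r})^2. -/
/-!
With `a = e^(-1/r)` we have `a^r = 1/e`, so `f(x) = x^r/r - a^(r-1) x + (r-1)/r · a^r` is `1/r` times
the gap between `x^r` and its tangent line at `a`. Expanding `x^r = (a + (x - a))^r` binomially, all
terms are nonnegative for `x ≥ a`, and the quadratic one alone is `r(r-1)/2 · a^(r-2) (x - a)^2`.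
-/

open Finset

theorem sum_range_choose_mul_le_add_pow {R : Type*} [CommSemiring R] [PartialOrder R]
    [IsOrderedRing R] {x y : R} (hx : 0 ≤ x) (hy : 0 ≤ y) {m n : ℕ} (hm : m ≤ n + 1) :
    ∑ k ∈ range m, x ^ k * y ^ (n - k) * n.choose k ≤ (x + y) ^ n := by
  rw [add_pow]
  exact sum_le_sum_of_subset_of_nonneg (range_subset_range.2 hm) fun _ _ _ => by positivity

theorem quadratic_le_pow_sub_tangent {n : ℕ} (hn : 2 ≤ n) {a x : ℝ} (ha : 0 ≤ a) (hax : a ≤ x) :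
    ((n : ℝ) - 1) / 2 * a ^ (n - 2) * (x - a) ^ 2
      ≤ x ^ n / n - x * a ^ (n - 1) + ((n : ℝ) - 1) / n * a ^ n := by
  obtain ⟨m, rfl⟩ : ∃ m, n = m + 2 := ⟨n - 2, by omega⟩
  have hbinom := sum_range_choose_mul_le_add_pow (sub_nonneg.2 hax) ha (by omega : 3 ≤ m + 2 + 1)
  simp only [sum_range_succ, sum_range_zero, Nat.cast_choose_two, sub_add_cancel, Nat.sub_zero,
    Nat.choose_zero_right, Nat.choose_one_right, show m + 2 - 1 = m + 1 by omega,
    Nat.add_sub_cancel] at hbinom ⊢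
  push_cast at hbinom ⊢
  have hgap : x ^ (m + 2) / (m + 2) - x * a ^ (m + 1) + (m + 2 - 1) / (m + 2) * a ^ (m + 2)
        - (m + 2 - 1) / 2 * a ^ m * (x - a) ^ 2
      = (x ^ (m + 2) - (a ^ (m + 2) + (x - a) * a ^ (m + 1) * (m + 2)
          + (x - a) ^ 2 * a ^ m * ((m + 2) * (m + 2 - 1) / 2))) / (m + 2) := by
    field_simp
    ring
  rw [← sub_nonneg, hgap]
  exact div_nonneg (by simpa using hbinom) (by positivity)

theorem stmt_2 (r : ℕ) (hr : 2 ≤ r) (e : ℝ) (he : 0 < e)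
    (f : ℝ → ℝ)
    (hf : ∀ x : ℝ, f x = x ^ r / r - x / e ^ (((r : ℝ) - 1) / r) + ((r : ℝ) - 1) / (r * e)) :
    ∀ x : ℝ, e ^ (-(1 : ℝ) / r) < x →
      ((r : ℝ) - 1) / 2 * e ^ (-1 + 2 / (r : ℝ)) * (x - e ^ (-(1 : ℝ) / r)) ^ 2 ≤ f x := by
  intro x hx
  set a := e ^ (-(1 : ℝ) / r)
  have hr0 : (r : ℝ) ≠ 0 := by positivity
  have hpow (k : ℕ) : a ^ k = e ^ (-(1 : ℝ) / r * k) := (Real.rpow_mul_natCast he.le _ k).symm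
  have hdenom : e ^ (((r : ℝ) - 1) / r) = (a ^ (r - 1))⁻¹ := by
    rw [hpow, ← Real.rpow_neg he.le, Nat.cast_sub (by omega)]
    congr 1
    field_simp
    ring
  have hcoeff : e ^ (-1 + 2 / (r : ℝ)) = a ^ (r - 2) := by
    rw [hpow, Nat.cast_sub hr]
    congr 1
    field_simp
    ring
  have hconst : ((r : ℝ) - 1) / (r * e) = ((r : ℝ) - 1) / r * a ^ r := by
    rw [hpow, div_mul_cancel₀ _ hr0, Real.rpow_neg_one]
    field_simp
  rw [hf, hdenom, hcoeff, hconst, div_inv_eq_mul]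
  exact quadratic_le_pow_sub_tangent hr (by positivity) hx.le
end

section
/- Let r ≥ 3, n ≥ 1 be integers and let a : (Fin n)^r → {0,1} be a 0-1 array (an r-order tensor) with e = ∑ a(i₁,…,i_r) ones, e ≥ 1. Then for every x ∈ ℝ^n with x ≥ 0 and ∑_i x_i^r = 1, one has ∑_{i₁,…,i_r} a(i₁,…,i_r) x_{i₁} ⋯ x_{i_r} ≤ e^{(r-1)/r}. -/
/-!
Put `t i = ∏ⱼ x (i j)`. Weighted Hölder with the weights `a i ∈ [0, 1]` gives
`∑ a t ≤ (∑ a) ^ (1 - 1/r) * (∑ a t ^ r) ^ (1/r)`, and `∑ a t ^ r ≤ ∑ t ^ r = (∑ x ^ r) ^ r = 1`.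
-/

open Finset Real

theorem inner_le_weight_mul_Lp_of_le_one {ι : Type*} (s : Finset ι) {p : ℝ} (hp : 1 ≤ p)
    {w f : ι → ℝ} (hw₀ : ∀ i, 0 ≤ w i) (hw₁ : ∀ i, w i ≤ 1) (hf : ∀ i, 0 ≤ f i) :
    ∑ i ∈ s, w i * f i ≤ (∑ i ∈ s, w i) ^ (1 - p⁻¹) * (∑ i ∈ s, f i ^ p) ^ p⁻¹ := by
  calc ∑ i ∈ s, w i * f i
      ≤ (∑ i ∈ s, w i) ^ (1 - p⁻¹) * (∑ i ∈ s, w i * f i ^ p) ^ p⁻¹ :=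
        inner_le_weight_mul_Lp_of_nonneg s hp w f hw₀ hf
    _ ≤ (∑ i ∈ s, w i) ^ (1 - p⁻¹) * (∑ i ∈ s, f i ^ p) ^ p⁻¹ := by
      have hwf : ∀ i, 0 ≤ w i * f i ^ p := fun i => mul_nonneg (hw₀ i) (rpow_nonneg (hf i) p)
      refine mul_le_mul_of_nonneg_left ?_ (rpow_nonneg (sum_nonneg fun i _ => hw₀ i) _)
      refine rpow_le_rpow (sum_nonneg fun i _ => hwf i) ?_ (inv_nonneg.2 (by linarith))
      exact sum_le_sum fun i _ => mul_le_of_le_one_left (rpow_nonneg (hf i) p) (hw₁ i)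

theorem stmt_4_general (n r : ℕ) (hr : 3 ≤ r)
    (a : (Fin r → Fin n) → ℝ) (ha : ∀ i, a i = 0 ∨ a i = 1)
    (e : ℝ) (he : e = ∑ i : Fin r → Fin n, a i)
    (x : Fin n → ℝ) (hx : ∀ i, 0 ≤ x i) (hnorm : ∑ i, x i ^ r = 1) :
    ∑ i : Fin r → Fin n, a i * ∏ j, x (i j) ≤ e ^ (((r : ℝ) - 1) / r) := by
  have hr₁ : (1 : ℝ) ≤ r := by exact_mod_cast (by omega : 1 ≤ r)
  have ha_mem : ∀ i, 0 ≤ a i ∧ a i ≤ 1 := fun i => by rcases ha i with h | h <;> simp [h]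
  have hmonomials : ∑ i : Fin r → Fin n, (∏ j, x (i j)) ^ (r : ℝ) = 1 := by
    simp only [rpow_natCast, ← prod_pow]
    rw [← Fintype.sum_pow (fun k => x k ^ r), hnorm, one_pow]
  have hexponent : 1 - (r : ℝ)⁻¹ = ((r : ℝ) - 1) / r := by field_simp
  calc ∑ i, a i * ∏ j, x (i j)
      ≤ (∑ i, a i) ^ (1 - (r : ℝ)⁻¹) *
          (∑ i : Fin r → Fin n, (∏ j, x (i j)) ^ (r : ℝ)) ^ (r : ℝ)⁻¹ :=
        inner_le_weight_mul_Lp_of_le_one univ hr₁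
          (fun i => (ha_mem i).1) (fun i => (ha_mem i).2)
          (fun i => prod_nonneg fun j _ => hx (i j))
    _ = e ^ (((r : ℝ) - 1) / r) := by rw [hmonomials, one_rpow, mul_one, he, hexponent]

theorem stmt_4 (n r : ℕ) (hn : 1 ≤ n) (hr : 3 ≤ r)
    (a : (Fin r → Fin n) → ℝ) (ha : ∀ i, a i = 0 ∨ a i = 1)
    (e : ℝ) (he : e = ∑ i : Fin r → Fin n, a i) (he1 : 1 ≤ e)
    (x : Fin n → ℝ) (hx : ∀ i, 0 ≤ x i) (hnorm : ∑ i, x i ^ r = 1) :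
    ∑ i : Fin r → Fin n, a i * ∏ j, x (i j) ≤ e ^ (((r : ℝ) - 1) / r) :=
  stmt_4_general n r hr a ha e he x hx hnorm
end

section
/- Let r ≥ 3 be an integer, s, t ≥ 0 reals with t > 0, and w a real with 0 < w and (s+t)w < 1. Define F(w) = [(1-sw)^{-1/(r-1)} - (1-(s+t)w)^{-1/(r-1)}] + [(1 + tw/(1-sw))^{1/(r-1)} - 1]. Then F(w) < 0. -/
/-!
With `p = 1/(r-1) ∈ (0, 1)`, `a = 1 - s w` and `b = 1 - (s+t) w`, put `u = 1 - b/a = t w / a ∈ (0, 1)`.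
Bernoulli's inequality for the negative exponent `-p`, together with `a ≤ 1`, gives
`b^(-p) - a^(-p) ≥ p u`, while the strict Bernoulli inequality for `0 < p < 1` gives
`(1 + u)^p - 1 < p u`.
-/

open Real

theorem one_add_mul_le_rpow_one_sub_neg {u p : ℝ} (hu : u < 1) (hp : 0 ≤ p) :
    1 + p * u ≤ (1 - u) ^ (-p) := by
  have hlog : log (1 - u) ≤ -u := by linarith [log_le_sub_one_of_pos (sub_pos.mpr hu)]
  calc 1 + p * u ≤ log (1 - u) * -p + 1 := by nlinarith
    _ ≤ exp (log (1 - u) * -p) := add_one_le_exp _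
    _ = (1 - u) ^ (-p) := (rpow_def_of_pos (sub_pos.mpr hu) _).symm

theorem mul_one_sub_div_le_rpow_neg_sub_rpow_neg {a b p : ℝ} (hb : 0 < b) (hba : b ≤ a)
    (ha : a ≤ 1) (hp : 0 ≤ p) : p * (1 - b / a) ≤ b ^ (-p) - a ^ (-p) := by
  have ha0 : 0 < a := hb.trans_le hba
  have hgap : 0 ≤ p * (1 - b / a) :=
    mul_nonneg hp (sub_nonneg.mpr ((div_le_one ha0).mpr hba))
  have hbern : 1 + p * (1 - b / a) ≤ (b / a) ^ (-p) := by
    simpa using one_add_mul_le_rpow_one_sub_neg (u := 1 - b / a) (by linarith [div_pos hb ha0]) hp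
  have hsplit : b ^ (-p) = a ^ (-p) * (b / a) ^ (-p) := by
    rw [← mul_rpow ha0.le (by positivity), mul_div_cancel₀ _ ha0.ne']
  have hone : 1 ≤ a ^ (-p) := one_le_rpow_of_pos_of_le_one_of_nonpos ha0 ha (by linarith)
  rw [hsplit]
  nlinarith

theorem stmt_9 (r : ℕ) (hr : 3 ≤ r) (s t w : ℝ)
    (hs : 0 ≤ s) (ht : 0 < t) (hw : 0 < w) (hstw : (s + t) * w < 1) :
    ((1 - s * w) ^ (-(1 : ℝ) / ((r : ℝ) - 1))
        - (1 - (s + t) * w) ^ (-(1 : ℝ) / ((r : ℝ) - 1)))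
      + ((1 + t * w / (1 - s * w)) ^ ((1 : ℝ) / ((r : ℝ) - 1)) - 1) < 0 := by
  have hr' : (3 : ℝ) ≤ r := by exact_mod_cast hr
  set p : ℝ := 1 / ((r : ℝ) - 1)
  have hp0 : 0 < p := div_pos one_pos (by linarith)
  have hp1 : p < 1 := (div_lt_one (by linarith)).mpr (by linarith)
  have hexp : -(1 : ℝ) / ((r : ℝ) - 1) = -p := by ring
  have htw : 0 < t * w := mul_pos ht hw
  have hsw : 0 ≤ s * w := mul_nonneg hs hw.le
  have ha : 0 < 1 - s * w := by nlinarith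
  set u := t * w / (1 - s * w)
  have hu0 : 0 < u := div_pos htw ha
  have hu : 1 - (1 - (s + t) * w) / (1 - s * w) = u := by simp only [u]; field_simp; ring
  have hconcave : (1 + u) ^ p < 1 + p * u :=
    rpow_one_add_lt_one_add_mul_self (by linarith) hu0.ne' hp0 hp1
  have hconvex : p * u ≤ (1 - (s + t) * w) ^ (-p) - (1 - s * w) ^ (-p) := by
    rw [← hu]
    exact mul_one_sub_div_le_rpow_neg_sub_rpow_neg (by linarith) (by nlinarith) (by linarith)
      hp0.le
  rw [hexp]
  linarith
end

section
/- There exists a 2-dimensional 3-order nonnegative tensor A and a transpose M of A (obtained by permuting the index roles) such that the spectral radii of A and M differ. Concretely, for A with slices A₁ = [[1,2],[2,2]], A₂ = [[2,1],[3,1]] and M with m_{ijk} = a_{kji} (slices M₁ = [[1,2],[2,3]], M₂ = [[2,1],[2,1]]), the number 7 is an eigenvalue of A with positive eigenvector, but 7 is not an eigenvalue of M with positive eigenvector. -/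
/-!
For `A` every slice sums to `7`, so the all-ones vector is an eigenvector for `7`.
For `M` the two eigen-equations are binary quadratic forms in `(x₀, x₁)`; moved to one side,
twice the first plus the second is `x₀ (11 x₁ - 10 x₀) = 0`, and substituting `x₁ = 10 x₀ / 11` back leaves
`14 x₀² = 0`, so no eigenvector for `7` can have `x₀ ≠ 0`.
-/

open Finset

theorem exists_pos_eigenvector_of_sum_eq {ι : Type*} [Fintype ι] (T : ι → ι → ι → ℝ) (c : ℝ)
    (hT : ∀ i, ∑ j, ∑ k, T i j k = c) :
    ∃ x : ι → ℝ, (∀ i, 0 < x i) ∧ ∀ i, ∑ j, ∑ k, T i j k * x j * x k = c * x i ^ 2 :=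
  ⟨fun _ => 1, fun _ => one_pos, fun i => by simpa using hT i⟩

theorem sum_fin_two_mul_mul (T : Fin 2 → Fin 2 → ℝ) (x : Fin 2 → ℝ) :
    ∑ j, ∑ k, T j k * x j * x k =
      T 0 0 * x 0 ^ 2 + (T 0 1 + T 1 0) * x 0 * x 1 + T 1 1 * x 1 ^ 2 := by
  simp only [Fin.sum_univ_two]
  ring

theorem eq_zero_of_quadratic_system {a b : ℝ}
    (h₁ : a ^ 2 + 4 * a * b + 3 * b ^ 2 = 7 * a ^ 2)
    (h₂ : 2 * a ^ 2 + 3 * a * b + b ^ 2 = 7 * b ^ 2) : a = 0 := by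
  have hfac : a * (11 * b - 10 * a) = 0 := by linear_combination 2 * h₁ + h₂
  rcases mul_eq_zero.mp hfac with ha | hb
  · exact ha
  · have : 14 * a ^ 2 = 0 := by
      linear_combination 121 * h₁ - (33 * b + 74 * a) * hb
    simpa using this

theorem stmt_13 (A M : Fin 2 → Fin 2 → Fin 2 → ℝ)
    (hA : A 0 0 0 = 1 ∧ A 0 0 1 = 2 ∧ A 0 1 0 = 2 ∧ A 0 1 1 = 2 ∧
          A 1 0 0 = 2 ∧ A 1 0 1 = 1 ∧ A 1 1 0 = 3 ∧ A 1 1 1 = 1)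
    (hM : ∀ i j k, M i j k = A k j i) :
    (∃ x : Fin 2 → ℝ, (∀ i, 0 < x i) ∧
      ∀ i, ∑ j, ∑ k, A i j k * x j * x k = 7 * x i ^ 2) ∧
    ¬(∃ x : Fin 2 → ℝ, (∀ i, 0 < x i) ∧
      ∀ i, ∑ j, ∑ k, M i j k * x j * x k = 7 * x i ^ 2) := by
  obtain ⟨h000, h001, h010, h011, h100, h101, h110, h111⟩ := hA
  refine ⟨exists_pos_eigenvector_of_sum_eq A 7 fun i => ?_, ?_⟩
  · fin_cases i <;> simp [Fin.sum_univ_two, *] <;> norm_num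
  · rintro ⟨x, hpos, hx⟩
    have e₀ := hx 0
    have e₁ := hx 1
    simp only [sum_fin_two_mul_mul, hM, h000, h001, h010, h011, h100, h101, h110, h111] at e₀ e₁
    refine (hpos 0).ne' (eq_zero_of_quadratic_system (b := x 1) ?_ ?_)
    · linear_combination e₀
    · linear_combination e₁
end

section
/- Let r ≥ 2, e ≥ 1, n ≥ 1 be integers and let a : [n]^r → {0,1} with exactly e ones. Suppose x ∈ ℝ^n is nonnegative with ∑ x_i^r = 1 and equality holds in the bound ∑ a(i₁,…,i_r) x_{i₁}⋯x_{i_r} = e^{(r-1)/r}. Then for every r-tuple (i₁,…,i_r) with x_{i₁}⋯x_{i_r} ≠ 0 one has a(i₁,…,i_r) = 1, and moreover (x_{i₁}⋯x_{i_r})^r = 1/e for every such tuple with a(i₁,…,i_r) = 1. -/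
/-!
Write `p i = x (i 0) ⋯ x (i (r-1))`, so that `∑ i, p i ^ r = (∑ k, x k ^ r) ^ r = 1`. On the
support `S` of `a`, which has `e` elements, the power mean inequality gives
`e ^ (r-1) = (∑ i ∈ S, p i) ^ r ≤ e ^ (r-1) * ∑ i ∈ S, p i ^ r ≤ e ^ (r-1)`. Hence
`∑ i ∈ S, p i ^ r = 1`, which forces `p = 0` off `S`, and equality holds in Jensen's inequality
for the strictly convex `t ↦ t ^ r`, so `p` is constant on `S`, equal to `e ^ (-1/r)`.
-/

open Finset

section PowerMean

variable {ι : Type*} {s : Finset ι} {f : ι → ℝ} {r : ℕ}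

lemma eq_sum_div_card_of_pow_sum_eq (hr : 2 ≤ r) (hf : ∀ i ∈ s, 0 ≤ f i)
    (h : (∑ i ∈ s, f i) ^ r = #s ^ (r - 1) * ∑ i ∈ s, f i ^ r) :
    ∀ i ∈ s, f i = (∑ i ∈ s, f i) / #s := by
  obtain rfl | hs := s.eq_empty_or_nonempty
  · simp
  have hcard : (0 : ℝ) < #s := by exact_mod_cast hs.card_pos
  have hw : ∑ _i ∈ s, (#s : ℝ)⁻¹ = 1 := by simp [hcard.ne']
  have jensen := (strictConvexOn_pow hr).map_sum_eq_iff (fun _ _ ↦ inv_pos.2 hcard) hw hf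
  simp only [smul_eq_mul, ← mul_sum] at jensen
  intro i hi
  rw [div_eq_inv_mul, ← jensen.1 ?_ i hi]
  obtain ⟨m, rfl⟩ : ∃ m, r = m + 1 := ⟨r - 1, by omega⟩
  rw [mul_pow, h, Nat.add_sub_cancel, ← mul_assoc, inv_pow, pow_succ', mul_inv,
    inv_mul_cancel_right₀ (by positivity)]

lemma sum_pow_eq_one_and_pow_eq_inv_card (hr : 2 ≤ r) (hf : ∀ i ∈ s, 0 ≤ f i)
    (hs : s.Nonempty) (hle : ∑ i ∈ s, f i ^ r ≤ 1) (hsum : (∑ i ∈ s, f i) ^ r = #s ^ (r - 1)) :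
    ∑ i ∈ s, f i ^ r = 1 ∧ ∀ i ∈ s, f i ^ r = 1 / #s := by
  have hcard : (0 : ℝ) < #s := by exact_mod_cast hs.card_pos
  obtain ⟨m, rfl⟩ : ∃ m, r = m + 1 := ⟨r - 1, by omega⟩
  have hpm := pow_sum_le_card_mul_sum_pow hf m
  rw [Nat.add_sub_cancel] at hsum
  have hone : ∑ i ∈ s, f i ^ (m + 1) = 1 := by
    refine le_antisymm hle (le_of_mul_le_mul_left ?_ (pow_pos hcard m))
    rw [mul_one]
    rwa [hsum] at hpm
  refine ⟨hone, fun i hi ↦ ?_⟩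
  have heq := eq_sum_div_card_of_pow_sum_eq hr hf (by rw [hsum, hone, mul_one, Nat.add_sub_cancel])
  rw [heq i hi, div_pow, hsum, pow_succ, div_mul_cancel_left₀ (by positivity), one_div]

end PowerMean

lemma sum_mul_eq_sum_filter_of_forall_eq_zero_or_one {ι : Type*} [Fintype ι] {a : ι → ℝ}
    (ha : ∀ i, a i = 0 ∨ a i = 1) (g : ι → ℝ) :
    ∑ i, a i * g i = ∑ i with a i = 1, g i := by
  rw [sum_filter]
  refine sum_congr rfl fun i _ ↦ ?_
  rcases ha i with h | h <;> simp [h]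

lemma sum_prod_apply_pow {ι : Type*} [Fintype ι] (x : ι → ℝ) (r m : ℕ) :
    ∑ i : Fin r → ι, (∏ j, x (i j)) ^ m = (∑ k, x k ^ m) ^ r := by
  simp only [Fintype.sum_pow, prod_pow]

lemma Real.rpow_sub_one_div_pow {x : ℝ} (hx : 0 ≤ x) {r : ℕ} (hr : r ≠ 0) :
    (x ^ (((r : ℝ) - 1) / r)) ^ r = x ^ (r - 1) := by
  rw [← Real.rpow_natCast, ← Real.rpow_mul hx, div_mul_cancel₀ _ (by positivity),
    ← Real.rpow_natCast, Nat.cast_sub (Nat.one_le_iff_ne_zero.2 hr), Nat.cast_one]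

theorem stmt_15_general (n r e : ℕ) (hr : 2 ≤ r) (he : 1 ≤ e)
    (a : (Fin r → Fin n) → ℝ) (ha : ∀ i, a i = 0 ∨ a i = 1)
    (hcount : (e : ℝ) = ∑ i : Fin r → Fin n, a i)
    (x : Fin n → ℝ) (hx0 : ∀ i, 0 ≤ x i) (hnorm : ∑ i, x i ^ r = 1)
    (heq : ∑ i : Fin r → Fin n, a i * ∏ j, x (i j) = (e : ℝ) ^ (((r : ℝ) - 1) / r)) :
    ∀ i : Fin r → Fin n,
      ((∏ j, x (i j)) ≠ 0 → a i = 1) ∧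
      (a i = 1 → (∏ j, x (i j)) ^ r = 1 / (e : ℝ)) := by
  set p : (Fin r → Fin n) → ℝ := fun i ↦ ∏ j, x (i j)
  set S : Finset (Fin r → Fin n) := {i | a i = 1}
  have hp0 (i) : 0 ≤ p i := prod_nonneg fun j _ ↦ hx0 (i j)
  have htotal : ∑ i, p i ^ r = 1 := by rw [sum_prod_apply_pow, hnorm, one_pow]
  have hcard : (#S : ℝ) = e := by
    calc (#S : ℝ) = ∑ i ∈ S, 1 := by simp
      _ = ∑ i, a i * 1 := (sum_mul_eq_sum_filter_of_forall_eq_zero_or_one ha 1).symm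
      _ = e := by simp [hcount]
  have hSsum : ∑ i ∈ S, p i = e ^ (((r : ℝ) - 1) / r) :=
    (sum_mul_eq_sum_filter_of_forall_eq_zero_or_one ha p).symm.trans heq
  have hSnonempty : S.Nonempty :=
    card_pos.1 <| (Nat.cast_pos (α := ℝ)).1 (by rw [hcard]; exact_mod_cast he)
  have hSle : ∑ i ∈ S, p i ^ r ≤ 1 :=
    htotal ▸ sum_le_univ_sum_of_nonneg fun i ↦ pow_nonneg (hp0 i) r
  obtain ⟨hSone, hSpow⟩ := sum_pow_eq_one_and_pow_eq_inv_card hr (fun i _ ↦ hp0 i) hSnonempty hSle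
    (by rw [hSsum, hcard, Real.rpow_sub_one_div_pow (Nat.cast_nonneg e) (by omega)])
  have hoff : ∀ i ∉ S, p i = 0 := by
    have hcompl : ∑ i ∈ Sᶜ, p i ^ r = 0 := by
      linarith [sum_add_sum_compl S fun i ↦ p i ^ r, hSone, htotal]
    intro i hi
    exact pow_eq_zero_iff (by omega) |>.1 <|
      (sum_eq_zero_iff_of_nonneg fun i _ ↦ pow_nonneg (hp0 i) r).1 hcompl i (mem_compl.2 hi)
  intro i
  refine ⟨fun hpi ↦ ?_, fun hai ↦ ?_⟩
  · by_contra hai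
    exact hpi (hoff i (by simpa [S] using hai))
  · rw [← hcard]
    exact hSpow i (by simpa [S] using hai)

theorem stmt_15 (n r e : ℕ) (hn : 1 ≤ n) (hr : 2 ≤ r) (he : 1 ≤ e)
    (a : (Fin r → Fin n) → ℝ) (ha : ∀ i, a i = 0 ∨ a i = 1)
    (hcount : (e : ℝ) = ∑ i : Fin r → Fin n, a i)
    (x : Fin n → ℝ) (hx0 : ∀ i, 0 ≤ x i) (hnorm : ∑ i, x i ^ r = 1)
    (heq : ∑ i : Fin r → Fin n, a i * ∏ j, x (i j) = (e : ℝ) ^ (((r : ℝ) - 1) / r)) :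
    ∀ i : Fin r → Fin n,
      ((∏ j, x (i j)) ≠ 0 → a i = 1) ∧
      (a i = 1 → (∏ j, x (i j)) ^ r = 1 / (e : ℝ)) :=
  stmt_15_general n r e hr he a ha hcount x hx0 hnorm heq
end
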